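/- Let M be an A-module satisfying (I1)–(I4), let 𝒳 ⊆ X be a lower set (if x ≤ y and y ∈ 𝒳 then x ∈ 𝒳), and set M^𝒳 = ⊕_{x∈𝒳} A m_x. If M' ∈ M satisfies M̄' = M' and M' ∈ M^𝒳 + M_{<0}, then M' ∈ M^𝒳. -/

import Mathlib

/-!
Suppose `M'` has a coefficient outside `𝒳` and take `x ∉ 𝒳` maximal among such indices.
As `𝒳` is a lower set, no `y > x` occurs in `M'`, so by (I3) the coefficient of `m_x` in
`bar M'` is the bar of its coefficient `c` in `M'`. Hence `c` is bar-invariant; it also lies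
in `A_{<0}` because `x ∉ 𝒳`, and the only bar-invariant element of `A_{<0}` is `0`.
-/

open scoped Classical

noncomputable section

namespace CellsCacti

/-- The group algebra `A = ℤ[𝔄]` of a totally ordered abelian group `𝔄`,
written exponentially: `A = ⊕_{a ∈ 𝔄} ℤ vᵃ`. -/
abbrev GA (𝔄 : Type*) [AddCommGroup 𝔄] [LinearOrder 𝔄] [IsOrderedAddMonoid 𝔄] := AddMonoidAlgebra ℤ 𝔄

variable {𝔄 : Type*} [AddCommGroup 𝔄] [LinearOrder 𝔄] [IsOrderedAddMonoid 𝔄]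

/-- The element `vᵃ` of `A = ℤ[𝔄]`. -/
def v (a : 𝔄) : GA 𝔄 := AddMonoidAlgebra.single a 1

/-- The bar involution of `A = ℤ[𝔄]`, determined by `vᵃ ↦ v⁻ᵃ`. -/
def Abar : GA 𝔄 ≃ₐ[ℤ] GA 𝔄 := AddMonoidAlgebra.domCongr ℤ ℤ (AddEquiv.neg 𝔄)

/-- `A_{<0} = ⊕_{a < 0} ℤ vᵃ`, as a predicate on elements of `A`. -/
def Aneg (a : GA 𝔄) : Prop := ∀ γ ∈ a.coeff.support, γ < (0 : 𝔄)

/-- The setting of Section 2 of "Cells and cacti": an `A`-module `M` with an `A`-basis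
`(m_x)_{x ∈ X}` indexed by a poset `X` (hypothesis (I1)), endowed with a `bar`-semilinear
involution (hypothesis (I2)) satisfying the triangularity condition (I3), such that lower
intervals of `X` are finite (hypothesis (I4)). -/
structure BarModule (𝔄 : Type*) [AddCommGroup 𝔄] [LinearOrder 𝔄] [IsOrderedAddMonoid 𝔄] (X : Type*) [PartialOrder X]
    (Mod : Type*) [AddCommGroup Mod] [Module (GA 𝔄) Mod] where
  /-- (I1): the `A`-basis `(m_x)_{x ∈ X}` of `M`. -/
  m : Module.Basis X (GA 𝔄) Mod
  /-- (I2): a semilinear involution of `M` (additivity). -/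
  bar : Mod →+ Mod
  /-- (I2): semilinearity of the involution with respect to the bar involution of `A`. -/
  bar_smul : ∀ (a : GA 𝔄) (x : Mod), bar (a • x) = Abar a • bar x
  /-- (I2): `bar` is an involution. -/
  bar_invol : ∀ x : Mod, bar (bar x) = x
  /-- (I3): `bar m_x ≡ m_x` modulo `⊕_{y < x} A m_y`. -/
  I3 : ∀ x : X, bar (m x) - m x ∈ Submodule.span (GA 𝔄) (m '' {y | y < x})
  /-- (I4): the set `{y | y ≤ x}` is finite. -/
  I4 : ∀ x : X, {y | y ≤ x}.Finite

variable {X : Type*} [PartialOrder X] {Mod : Type*} [AddCommGroup Mod] [Module (GA 𝔄) Mod]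

/-- `M_{<0} = ⊕_{x ∈ X} A_{<0} m_x`. -/
def BarModule.Mneg (S : BarModule 𝔄 X Mod) : Set Mod :=
  {u | ∀ x : X, Aneg (S.m.repr u x)}

/-- `M_skew = {m ∈ M | m + bar m = 0}`. -/
def BarModule.Mskew (S : BarModule 𝔄 X Mod) : Set Mod :=
  {u | u + S.bar u = 0}

lemma coeff_Abar (a : GA 𝔄) (γ : 𝔄) : (Abar a).coeff γ = a.coeff (-γ) := by
  rw [Abar, AddMonoidAlgebra.coeff_domCongr]
  rfl

lemma eq_zero_of_aneg_of_Abar_eq {a : GA 𝔄} (hneg : Aneg a) (hbar : Abar a = a) : a = 0 := by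
  ext γ
  by_contra hγ
  have hγneg : γ < 0 := hneg γ (Finsupp.mem_support_iff.mpr hγ)
  have hγ' : a.coeff (-γ) ≠ 0 := by rwa [← coeff_Abar, hbar]
  exact lt_asymm hγneg (neg_lt_zero.mp (hneg _ (Finsupp.mem_support_iff.mpr hγ')))

namespace BarModule

variable (S : BarModule 𝔄 X Mod)

lemma repr_bar_basis_apply_of_not_lt {x y : X} (h : ¬ x < y) :
    S.m.repr (S.bar (S.m y)) x = S.m.repr (S.m y) x := by
  have hx : x ∉ (S.m.repr (S.bar (S.m y) - S.m y)).support :=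
    fun hx ↦ h (S.m.mem_span_image.mp (S.I3 y) hx)
  rwa [Finsupp.notMem_support_iff, map_sub, Finsupp.sub_apply, sub_eq_zero] at hx

lemma repr_bar_apply_of_forall_not_lt {u : Mod} {x : X}
    (h : ∀ y ∈ (S.m.repr u).support, ¬ x < y) :
    S.m.repr (S.bar u) x = Abar (S.m.repr u x) := by
  set c := S.m.repr u
  have hu : u = ∑ y ∈ c.support, c y • S.m y := by
    conv_lhs => rw [← S.m.linearCombination_repr u]
    rw [Finsupp.linearCombination_apply, Finsupp.sum]
  calc S.m.repr (S.bar u) x = ∑ y ∈ c.support, Abar (c y) * S.m.repr (S.bar (S.m y)) x := by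
        conv_lhs => rw [hu]
        simp only [map_sum, S.bar_smul, map_smul, Finsupp.finsetSum_apply, Finsupp.smul_apply,
          smul_eq_mul]
    _ = ∑ y ∈ c.support, Abar (c y) * Finsupp.single y 1 x :=
        Finset.sum_congr rfl fun y hy ↦ by
          rw [S.repr_bar_basis_apply_of_not_lt (h y hy), S.m.repr_self]
    _ = Abar (c x) := by
        rw [Finset.sum_eq_single x (fun y _ hyx ↦ by rw [Finsupp.single_eq_of_ne' hyx, mul_zero])
          (fun hx ↦ by rw [Finsupp.notMem_support_iff.mp hx, map_zero, zero_mul]),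
          Finsupp.single_eq_same, mul_one]

lemma repr_apply_eq_zero_of_bar_eq {u : Mod} (hbar : S.bar u = u) {x : X}
    (hneg : Aneg (S.m.repr u x)) (h : ∀ y ∈ (S.m.repr u).support, ¬ x < y) :
    S.m.repr u x = 0 :=
  eq_zero_of_aneg_of_Abar_eq hneg (by rw [← S.repr_bar_apply_of_forall_not_lt h, hbar])

end BarModule

/-- **Corollary 2.4** (cells and cacti): let `𝒳 ⊆ X` be a lower set and
`M^𝒳 = ⊕_{x ∈ 𝒳} A m_x`.  If `M' ∈ M` satisfies `bar M' = M'` and `M' ∈ M^𝒳 + M_{<0}`,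
then `M' ∈ M^𝒳`. -/
theorem coro_kl_base_triangulaire (S : BarModule 𝔄 X Mod) (𝒳 : Set X)
    (h𝒳 : ∀ x y : X, x ≤ y → y ∈ 𝒳 → x ∈ 𝒳) (M' : Mod)
    (hbar : S.bar M' = M')
    (hmem : ∃ u ∈ Submodule.span (GA 𝔄) (S.m '' 𝒳), ∃ w ∈ S.Mneg, M' = u + w) :
    M' ∈ Submodule.span (GA 𝔄) (S.m '' 𝒳) := by
  obtain ⟨u, hu, w, hw, hM⟩ := hmem
  rw [Module.Basis.mem_span_image]
  by_contra hns
  set c := S.m.repr M'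
  obtain ⟨x₀, hx₀c, hx₀𝒳⟩ := Set.not_subset.mp hns
  obtain ⟨x, hx⟩ : ∃ x, Maximal (· ∈ c.support.filter (· ∉ 𝒳)) x :=
    Finset.exists_maximal ⟨x₀, Finset.mem_filter.mpr ⟨hx₀c, hx₀𝒳⟩⟩
  obtain ⟨hxc, hx𝒳⟩ := Finset.mem_filter.mp hx.1
  have habove : ∀ y ∈ c.support, ¬ x < y := fun y hy hxy ↦ hx𝒳 <| h𝒳 x y hxy.le <| by
    by_contra hy𝒳
    exact hxy.not_ge (hx.2 (Finset.mem_filter.mpr ⟨hy, hy𝒳⟩) hxy.le)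
  have hneg : Aneg (c x) := by
    have hux : S.m.repr u x = 0 :=
      Finsupp.notMem_support_iff.mp fun h ↦ hx𝒳 (S.m.mem_span_image.mp hu h)
    simpa only [c, hM, map_add, Finsupp.add_apply, hux, zero_add] using hw x
  exact Finsupp.mem_support_iff.mp hxc (S.repr_apply_eq_zero_of_bar_eq hbar hneg habove)

end CellsCacti
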